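/- Let t ≥ 1, w ≥ 2 be integers and F a graph with ω(F) ≤ w. Let A ⊆ V(F) with |A| ≥ w^{t+2} and B ⊆ V(F) \ A. Then for every q ≥ 1, either (a) there are X ⊆ A and Y ⊆ B with ω(F[X]) + ω(F[Y]) ≤ ω(F), |A \ X| < w^{t+2}, and χ(B \ Y) < q; or (b) there is an anticomplete pair (P,Q) with P ⊆ A, Q ⊆ B, P a stable set of size t, and χ(Q) ≥ w^{-t(t+2)}·q. -/

import Mathlib

/-!
Peel off `r = wρ + 1` maximum cliques `K₀, K₁, …` from `A` one after the other (each a maximum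
clique of what is left), where `ρ = C(t - 1 + w, w) < w^t` is the Erdős–Szekeres bound for
`R(t, w + 1)`; let `W` be their union, so `|W| ≤ rw < w^(t+2)`, and let `X = A \ W`, whose clique
number is at most `|Kₛ|` for every `s`. Let `Y` be the set of `b ∈ B` with fewer than `ρ`
non-neighbours in `W`. A clique `C ⊆ Y` has fewer than `r` non-neighbours in `W` altogether, so
it is complete to one of the disjoint cliques `Kₛ`, whence `ω(Y) + ω(X) ≤ |C| + |Kₛ| ≤ ω(F)`.
Every `b ∈ B \ Y` has at least `ρ` non-neighbours in `W`, hence a stable `t`-set of them; as there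
are at most `|W|^t ≤ w^(t(t+2))` stable `t`-subsets of `W`, one of them is anticomplete to a part
of `B \ Y` carrying a `w^(-t(t+2))` fraction of its chromatic number.
-/

open SimpleGraph

/-- The chromatic number of the subgraph of `G` induced on `S`, as a natural number. -/
noncomputable def chiSet {V : Type*} (G : SimpleGraph V) (S : Set V) : ℕ :=
  (G.induce S).chromaticNumber.toNat

/-- The chromatic number of `G`, as a natural number. -/
noncomputable def chi {V : Type*} (G : SimpleGraph V) : ℕ :=
  G.chromaticNumber.toNat

/-- `(A, B)` is an anticomplete pair: no edge of `G` joins `A` and `B`. -/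
def Anticomplete {V : Type*} (G : SimpleGraph V) (A B : Set V) : Prop :=
  ∀ a ∈ A, ∀ b ∈ B, ¬ G.Adj a b

/-- `G` is `H`-free: no induced subgraph of `G` is isomorphic to `H`. -/
def FreeOf {V W : Type*} (G : SimpleGraph V) (H : SimpleGraph W) : Prop :=
  IsEmpty (H ↪g G)

open Finset Function

theorem Nat.add_choose_lt_pow {w : ℕ} (hw : 2 ≤ w) (m : ℕ) : (m + w).choose w < w ^ (m + 1) := by
  induction m with
  | zero => simpa using (by omega : 1 < w)
  | succ m ih =>
    have hrec : (m + 1 + w).choose w * (m + 1) = (m + w + 1) * (m + w).choose w := by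
      rw [← Nat.choose_symm_add, ← Nat.choose_symm_add, show m + 1 + w = m + w + 1 by omega,
        Nat.add_one_mul_choose_eq]
    refine lt_of_mul_lt_mul_right (a := m + 1) ?_ (Nat.zero_le _)
    rw [hrec, pow_succ]
    rcases m.eq_zero_or_pos with rfl | hm
    · simpa using (by nlinarith : w + 1 < w * w)
    · calc (m + w + 1) * (m + w).choose w < (m + w + 1) * w ^ (m + 1) :=
            Nat.mul_lt_mul_of_pos_left ih (by omega)
        _ ≤ w ^ (m + 1) * w * (m + 1) := by
          rw [mul_assoc, mul_comm]
          exact Nat.mul_le_mul_left _ (by nlinarith)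

theorem Finset.exists_disjoint_of_card_lt {ι α : Type*} [DecidableEq α] {I : Finset ι}
    {K : ι → Finset α} (hK : (I : Set ι).PairwiseDisjoint K) {N : Finset α} (hN : #N < #I) :
    ∃ i ∈ I, Disjoint (K i) N := by
  by_contra! h
  have hmeet : ∀ i ∈ I, (K i ∩ N).Nonempty := fun i hi => not_disjoint_iff_nonempty_inter.1 (h i hi)
  have := card_le_card_biUnion (hK.mono fun i => inter_subset_left) hmeet
  exact hN.not_ge (this.trans (card_le_card (biUnion_subset.2 fun i _ => inter_subset_right)))

namespace SimpleGraph

variable {V : Type*} {F : SimpleGraph V}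

lemma exists_isClique_card_eq_cliqueNum_induce [Finite V] (S : Set V) :
    ∃ K : Finset V, ↑K ⊆ S ∧ F.IsClique (K : Set V) ∧ #K = (F.induce S).cliqueNum := by
  obtain ⟨K, hK⟩ := (F.induce S).exists_isNClique_cliqueNum
  rw [isNClique_induce_iff] at hK
  exact ⟨K.map (.subtype _), by simp, hK.isClique, hK.card_eq⟩

lemma IsClique.card_le_cliqueNum_induce [Finite V] {S : Set V} {K : Finset V}
    (hK : F.IsClique (K : Set V)) (hKS : ↑K ⊆ S) : #K ≤ (F.induce S).cliqueNum := by
  classical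
  have hK' : (F.induce S).IsNClique #K (K.subtype (· ∈ S)) := by
    rw [isNClique_induce_iff, subtype_map_of_mem fun x hx => hKS hx]
    exact ⟨hK, rfl⟩
  exact hK'.card_eq ▸ IsClique.card_le_cliqueNum (tc := hK'.isClique)

lemma cliqueNum_induce_mono [Finite V] {S T : Set V} (h : S ⊆ T) :
    (F.induce S).cliqueNum ≤ (F.induce T).cliqueNum := by
  obtain ⟨K, hKS, hK, hcard⟩ := exists_isClique_card_eq_cliqueNum_induce (F := F) S
  exact hcard ▸ hK.card_le_cliqueNum_induce (hKS.trans h)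

lemma card_add_card_le_cliqueNum [Finite V] {C D : Finset V} (hC : F.IsClique (C : Set V))
    (hD : F.IsClique (D : Set V)) (hCD : ∀ c ∈ C, ∀ d ∈ D, F.Adj c d) :
    #C + #D ≤ F.cliqueNum := by
  classical
  have hdisj : Disjoint C D := Finset.disjoint_left.2 fun c hc hcD => (hCD c hc c hcD).ne rfl
  have hunion : F.IsClique ((C ∪ D : Finset V) : Set V) := by
    rw [coe_union, IsClique, Set.pairwise_union]
    exact ⟨hC, hD, fun c hc d hd _ => ⟨hCD c hc d hd, (hCD c hc d hd).symm⟩⟩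
  rw [← card_union_of_disjoint hdisj]
  exact IsClique.card_le_cliqueNum (tc := hunion)

theorem exists_isIndepSet_of_choose_le :
    ∀ (t a : ℕ) (S : Finset V), (∀ K ⊆ S, F.IsClique (K : Set V) → #K ≤ a) →
      (t + a).choose a ≤ #S → ∃ P ⊆ S, #P = t + 1 ∧ F.IsIndepSet (P : Set V)
  | 0, a, S, _, hS => by
    obtain ⟨v, hv⟩ : S.Nonempty := card_pos.1 (by simpa using hS)
    exact ⟨{v}, by simpa, card_singleton v, by simp⟩
  | t + 1, 0, S, hcl, hS => by
    obtain ⟨v, hv⟩ : S.Nonempty := card_pos.1 (by simpa using hS)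
    simpa using hcl {v} (by simpa) (by simp)
  | t + 1, a + 1, S, hcl, hS => by
    classical
    obtain ⟨v, hv⟩ : S.Nonempty := card_pos.1 (lt_of_lt_of_le (Nat.choose_pos (by omega)) hS)
    set N := (S.erase v).filter (F.Adj v)
    set M := (S.erase v).filter (fun x => ¬ F.Adj v x)
    have hNM : #N + #M + 1 = #S := by
      rw [card_filter_add_card_filter_not, card_erase_add_one hv]
    have hpascal : (t + 1 + (a + 1)).choose (a + 1) =
        (t + 1 + a).choose a + (t + (a + 1)).choose (a + 1) := by
      rw [show t + 1 + (a + 1) = t + 1 + a + 1 by omega, Nat.choose_succ_succ,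
        show t + 1 + a = t + (a + 1) by omega]
    by_cases hN : (t + 1 + a).choose a ≤ #N
    · have hclN : ∀ K ⊆ N, F.IsClique (K : Set V) → #K ≤ a := by
        intro K hKN hK
        have hvK : v ∉ K := fun h => by simpa [N] using hKN h
        have hadj : ∀ x ∈ K, F.Adj v x := fun x hx => (mem_filter.1 (hKN hx)).2
        have := hcl (insert v K)
          (insert_subset hv fun x hx => mem_of_mem_erase (mem_of_mem_filter x (hKN hx)))
          (by rw [coe_insert]; exact hK.insert fun x hx _ => hadj x hx)
        rw [card_insert_of_notMem hvK] at this
        omega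
      obtain ⟨P, hPN, hP⟩ := exists_isIndepSet_of_choose_le (t + 1) a N hclN hN
      exact ⟨P, hPN.trans ((filter_subset _ _).trans (erase_subset v S)), hP⟩
    · have hMS : M ⊆ S := (filter_subset _ _).trans (erase_subset v S)
      obtain ⟨P, hPM, hPcard, hP⟩ := exists_isIndepSet_of_choose_le t (a + 1) M
        (fun K hKM => hcl K (hKM.trans hMS)) (by omega)
      have hvP : v ∉ P := fun h => by simpa [M] using hPM h
      refine ⟨insert v P, insert_subset hv (hPM.trans hMS),
        by rw [card_insert_of_notMem hvP, hPcard], ?_⟩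
      rw [coe_insert, IsIndepSet, Set.pairwise_insert_of_notMem hvP]
      exact ⟨hP, fun x hx =>
        ⟨(mem_filter.1 (hPM hx)).2, fun h => (mem_filter.1 (hPM hx)).2 h.symm⟩⟩
termination_by t a => t + a

variable [Finite V] (F)

noncomputable def maxCliqueIn (S : Finset V) : Finset V :=
  (F.exists_isClique_card_eq_cliqueNum_induce ↑S).choose

variable {F}

lemma maxCliqueIn_subset (S : Finset V) : F.maxCliqueIn S ⊆ S := by
  exact_mod_cast (F.exists_isClique_card_eq_cliqueNum_induce ↑S).choose_spec.1

lemma isClique_maxCliqueIn (S : Finset V) : F.IsClique (F.maxCliqueIn S : Set V) :=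
  (F.exists_isClique_card_eq_cliqueNum_induce ↑S).choose_spec.2.1

lemma card_maxCliqueIn (S : Finset V) : #(F.maxCliqueIn S) = (F.induce ↑S).cliqueNum :=
  (F.exists_isClique_card_eq_cliqueNum_induce ↑S).choose_spec.2.2

variable [DecidableEq V] (F)

noncomputable def cliquePeel (A : Finset V) : ℕ → Finset V
  | 0 => A
  | s + 1 => cliquePeel A s \ F.maxCliqueIn (cliquePeel A s)

noncomputable def peeledClique (A : Finset V) (s : ℕ) : Finset V :=
  F.maxCliqueIn (F.cliquePeel A s)

variable {F}

lemma peeledClique_subset (A : Finset V) (s : ℕ) : F.peeledClique A s ⊆ F.cliquePeel A s :=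
  maxCliqueIn_subset _

lemma cliquePeel_antitone (A : Finset V) : Antitone (F.cliquePeel A) :=
  antitone_nat_of_succ_le fun _ => sdiff_subset

lemma cliquePeel_subset (A : Finset V) (r : ℕ) : F.cliquePeel A r ⊆ A :=
  cliquePeel_antitone A (Nat.zero_le r)

lemma sdiff_cliquePeel (A : Finset V) (r : ℕ) :
    A \ F.cliquePeel A r = (range r).biUnion (F.peeledClique A) := by
  induction r with
  | zero => simp [cliquePeel]
  | succ r ih =>
    rw [cliquePeel, range_add_one, biUnion_insert, ← ih, union_comm]
    exact sdiff_sdiff_eq_sdiff_union ((peeledClique_subset A r).trans (cliquePeel_subset A r))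

lemma pairwise_disjoint_peeledClique (A : Finset V) :
    Pairwise (Disjoint on (F.peeledClique A)) := by
  refine pairwise_disjoint_on _ |>.2 fun s s' hss' => ?_
  have hsub : F.peeledClique A s' ⊆ F.cliquePeel A (s + 1) :=
    (peeledClique_subset A s').trans (cliquePeel_antitone A hss')
  exact disjoint_sdiff.mono_right hsub

lemma cliqueNum_cliquePeel_le (A : Finset V) {s r : ℕ} (h : s ≤ r) :
    (F.induce ↑(F.cliquePeel A r)).cliqueNum ≤ #(F.peeledClique A s) :=
  (cliqueNum_induce_mono (by exact_mod_cast cliquePeel_antitone A h)).trans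
    (card_maxCliqueIn _).ge

lemma card_sdiff_cliquePeel_le (A : Finset V) (r : ℕ) :
    #(A \ F.cliquePeel A r) ≤ r * F.cliqueNum := by
  rw [sdiff_cliquePeel]
  calc #((range r).biUnion (F.peeledClique A))
      ≤ ∑ s ∈ range r, #(F.peeledClique A s) := card_biUnion_le
    _ ≤ ∑ _s ∈ range r, F.cliqueNum :=
      sum_le_sum fun s _ => (card_maxCliqueIn _).trans_le (cliqueNum_induce_le _)
    _ = r * F.cliqueNum := by simp

lemma cliqueNum_cliquePeel_add_cliqueNum_induce_le [DecidableRel F.Adj] {A : Finset V}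
    {Y : Set V} {ρ r : ℕ} (hr : F.cliqueNum * ρ < r)
    (hY : ∀ b ∈ Y, #{x ∈ A \ F.cliquePeel A r | ¬F.Adj b x} < ρ) :
    (F.induce ↑(F.cliquePeel A r)).cliqueNum + (F.induce Y).cliqueNum ≤ F.cliqueNum := by
  obtain ⟨C, hCY, hC, hCcard⟩ := exists_isClique_card_eq_cliqueNum_induce (F := F) Y
  set N := C.biUnion fun b => {x ∈ A \ F.cliquePeel A r | ¬F.Adj b x}
  have hN : #N < #(range r) := calc
    #N ≤ ∑ b ∈ C, #{x ∈ A \ F.cliquePeel A r | ¬F.Adj b x} := card_biUnion_le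
    _ ≤ ∑ _b ∈ C, ρ := sum_le_sum fun b hb => (hY b (hCY hb)).le
    _ ≤ F.cliqueNum * ρ := by
      simpa using Nat.mul_le_mul_right ρ (IsClique.card_le_cliqueNum (tc := hC))
    _ < #(range r) := by simpa using hr
  obtain ⟨s, hs, hdisj⟩ :=
    exists_disjoint_of_card_lt ((pairwise_disjoint_peeledClique A).set_pairwise _) hN
  have hadj : ∀ b ∈ C, ∀ x ∈ F.peeledClique A s, F.Adj b x := by
    intro b hb x hx
    by_contra hbx
    have hxW : x ∈ A \ F.cliquePeel A r := sdiff_cliquePeel A r ▸ mem_biUnion.2 ⟨s, hs, hx⟩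
    exact Finset.disjoint_left.1 hdisj hx (mem_biUnion.2 ⟨b, hb, mem_filter.2 ⟨hxW, hbx⟩⟩)
  calc _ ≤ #(F.peeledClique A s) + #C :=
        hCcard ▸ Nat.add_le_add_right (cliqueNum_cliquePeel_le A (mem_range.1 hs).le) _
    _ ≤ F.cliqueNum := add_comm #C _ ▸ card_add_card_le_cliqueNum hC (isClique_maxCliqueIn _) hadj

end SimpleGraph

section chiSet

variable {V : Type*} {F : SimpleGraph V}

lemma chiSet_le_of_colorable {S : Set V} {n : ℕ} (h : (F.induce S).Colorable n) :
    chiSet F S ≤ n :=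
  ENat.toNat_le_of_le_natCast h.chromaticNumber_le

variable [Finite V]

lemma colorable_chiSet (S : Set V) : (F.induce S).Colorable (chiSet F S) :=
  colorable_chromaticNumber_of_fintype _

lemma chiSet_mono {S T : Set V} (h : S ⊆ T) : chiSet F S ≤ chiSet F T :=
  chiSet_le_of_colorable ((colorable_chiSet T).of_hom (F.induceHomOfLE h).toHom)

lemma chiSet_union_le (S T : Set V) : chiSet F (S ∪ T) ≤ chiSet F S + chiSet F T := by
  classical
  obtain ⟨cS⟩ := colorable_chiSet (F := F) S
  obtain ⟨cT⟩ := colorable_chiSet (F := F) T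
  let c : (F.induce (S ∪ T)).Coloring (Fin (chiSet F S) ⊕ Fin (chiSet F T)) :=
    Coloring.mk (fun v => if h : v.1 ∈ S then .inl (cS ⟨v, h⟩)
      else .inr (cT ⟨v, v.2.resolve_left h⟩)) fun {u v} huv => by
        by_cases hu : u.1 ∈ S <;> by_cases hv : v.1 ∈ S <;>
          simp only [hu, hv, ↓reduceDIte, ne_eq, reduceCtorEq, not_false_eq_true,
            Sum.inl.injEq, Sum.inr.injEq]
        · exact cS.valid huv
        · exact cT.valid huv
  exact chiSet_le_of_colorable (by simpa using c.colorable)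

lemma chiSet_le_sum_of_subset_biUnion {ι : Type*} {S : Set V} {I : Finset ι} {Q : ι → Set V}
    (h : S ⊆ ⋃ i ∈ I, Q i) : chiSet F S ≤ ∑ i ∈ I, chiSet F (Q i) := by
  classical
  induction I using Finset.induction_on generalizing S with
  | empty =>
    obtain rfl : S = ∅ := by simpa using h
    exact chiSet_le_of_colorable (Colorable.of_isEmpty 0)
  | insert i I hi ih =>
    rw [set_biUnion_insert] at h
    rw [sum_insert hi]
    exact (chiSet_mono h).trans <|
      (chiSet_union_le _ _).trans (Nat.add_le_add_left (ih subset_rfl) _)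

lemma exists_chiSet_le_card_mul {ι : Type*} {S : Set V} {I : Finset ι} {Q : ι → Set V}
    (h : S ⊆ ⋃ i ∈ I, Q i) (hS : chiSet F S ≠ 0) :
    ∃ i ∈ I, chiSet F S ≤ #I * chiSet F (Q i) := by
  have hsum := chiSet_le_sum_of_subset_biUnion (F := F) h
  obtain ⟨i, hi, hmax⟩ := I.exists_max_image (fun i => chiSet F (Q i))
    (nonempty_iff_ne_empty.2 fun hI => hS (by simpa [hI] using hsum))
  refine ⟨i, hi, hsum.trans ?_⟩
  simpa using sum_le_sum hmax

lemma exists_isIndepSet_anticomplete_chiSet_le [DecidableRel F.Adj] {W : Finset V}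
    {S : Set V} {a m : ℕ} (ha : F.cliqueNum ≤ a)
    (hS : ∀ b ∈ S, (m + a).choose a ≤ #{x ∈ W | ¬F.Adj b x}) (hχ : chiSet F S ≠ 0) :
    ∃ (P : Finset V) (Q : Set V), P ⊆ W ∧ Q ⊆ S ∧ #P = m + 1 ∧ F.IsIndepSet (P : Set V) ∧
      Anticomplete F P Q ∧ chiSet F S ≤ #W ^ (m + 1) * chiSet F Q := by
  classical
  set Ps : Finset (Finset V) := {P ∈ W.powersetCard (m + 1) | F.IsIndepSet (P : Set V)}
  set Q : Finset V → Set V := fun P => {b ∈ S | ∀ p ∈ P, ¬F.Adj p b}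
  have hcover : S ⊆ ⋃ P ∈ Ps, Q P := by
    intro b hb
    obtain ⟨P, hPW, hPcard, hP⟩ := exists_isIndepSet_of_choose_le m a _
      (fun K _ hK => (IsClique.card_le_cliqueNum (tc := hK)).trans ha) (hS b hb)
    refine Set.mem_biUnion (mem_filter.2 ⟨mem_powersetCard.2 ⟨hPW.trans (filter_subset _ _),
      hPcard⟩, hP⟩) ⟨hb, fun p hp h => (mem_filter.1 (hPW hp)).2 h.symm⟩
  obtain ⟨P, hPPs, hPχ⟩ := exists_chiSet_le_card_mul hcover hχ
  obtain ⟨hPW, hPcard⟩ := mem_powersetCard.1 (mem_filter.1 hPPs).1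
  refine ⟨P, Q P, hPW, fun b hb => hb.1, hPcard, (mem_filter.1 hPPs).2,
    fun p hp b hb => hb.2 p hp, hPχ.trans (Nat.mul_le_mul_right _ ?_)⟩
  calc #Ps ≤ #(W.powersetCard (m + 1)) := card_filter_le _ _
    _ = (#W).choose (m + 1) := card_powersetCard _ _
    _ ≤ #W ^ (m + 1) := Nat.choose_le_pow _ _

end chiSet

theorem stmt_14_general {V : Type*} [Fintype V] (t w q : ℕ) (ht : 1 ≤ t) (hw : 2 ≤ w)
    (hq : 1 ≤ q) (F : SimpleGraph V) (hclique : F.cliqueNum ≤ w)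
    (A B : Set V) :
    (∃ X Y : Set V, X ⊆ A ∧ Y ⊆ B ∧
        (F.induce X).cliqueNum + (F.induce Y).cliqueNum ≤ F.cliqueNum ∧
        (A \ X).ncard < w ^ (t + 2) ∧ chiSet F (B \ Y) < q) ∨
      (∃ P Q : Set V, P ⊆ A ∧ Q ⊆ B ∧ (∀ u ∈ P, ∀ v ∈ P, ¬ F.Adj u v) ∧
        P.ncard = t ∧ Anticomplete F P Q ∧ q ≤ chiSet F Q * w ^ (t * (t + 2))) := by
  classical
  obtain ⟨m, rfl⟩ : ∃ m, t = m + 1 := ⟨t - 1, by omega⟩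
  set ρ := (m + w).choose w
  set r := w * ρ + 1
  set X := F.cliquePeel A.toFinset r
  set W := A.toFinset \ X
  have hXA : (X : Set V) ⊆ A := by simpa using cliquePeel_subset (F := F) A.toFinset r
  have hWcard : #W < w ^ (m + 1 + 2) := by
    have hρ := Nat.add_choose_lt_pow hw m
    calc #W ≤ r * F.cliqueNum := card_sdiff_cliquePeel_le _ _
      _ ≤ (w * ρ + 1) * w := Nat.mul_le_mul_left _ hclique
      _ < w ^ (m + 1 + 2) := by rw [pow_add]; nlinarith
  set Y : Set V := {b ∈ B | #{x ∈ W | ¬F.Adj b x} < ρ}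
  by_cases hχ : chiSet F (B \ Y) < q
  · refine .inl ⟨X, Y, hXA, fun b hb => hb.1,
      cliqueNum_cliquePeel_add_cliqueNum_induce_le ?_ fun b hb => hb.2, ?_, hχ⟩
    · calc F.cliqueNum * ρ ≤ w * ρ := Nat.mul_le_mul_right _ hclique
        _ < r := Nat.lt_succ_self _
    · rwa [← Set.ncard_coe_finset, coe_sdiff, Set.coe_toFinset] at hWcard
  · obtain ⟨P, Q, hPW, hQ, hPcard, hP, hPQ, hχQ⟩ :=
      exists_isIndepSet_anticomplete_chiSet_le (S := B \ Y) (W := W) hclique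
        (fun b hb => not_lt.1 fun h => hb.2 ⟨hb.1, h⟩) (by omega)
    refine .inr ⟨P, Q, by simpa using coe_subset.2 (hPW.trans sdiff_subset),
      hQ.trans Set.sdiff_subset, fun u hu v hv h => hP hu hv h.ne h,
      by rw [Set.ncard_coe_finset, hPcard], hPQ, ?_⟩
    calc q ≤ chiSet F (B \ Y) := not_lt.1 hχ
      _ ≤ #W ^ (m + 1) * chiSet F Q := hχQ
      _ ≤ (w ^ (m + 1 + 2)) ^ (m + 1) * chiSet F Q :=
        Nat.mul_le_mul_right _ (Nat.pow_le_pow_left hWcard.le _)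
      _ = chiSet F Q * w ^ ((m + 1) * (m + 1 + 2)) := by rw [← pow_mul, mul_comm (m + 1 + 2)]; ring

/-- Let `t ≥ 1`, `w ≥ 2`, `F` a graph with `ω(F) ≤ w`, `A ⊆ V(F)` with
`|A| ≥ w^{t+2}`, `B ⊆ V(F) \ A` and `q ≥ 1`. Then either (a) there are `X ⊆ A`, `Y ⊆ B`
with `ω(F[X]) + ω(F[Y]) ≤ ω(F)`, `|A \ X| < w^{t+2}`, and `χ(B \ Y) < q`; or (b) there
is an anticomplete pair `(P, Q)` with `P ⊆ A` a stable set of size `t`, `Q ⊆ B`, and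
`χ(Q) ≥ w^{−t(t+2)}·q`. -/
theorem stmt_14 {V : Type*} [Fintype V] (t w q : ℕ) (ht : 1 ≤ t) (hw : 2 ≤ w)
    (hq : 1 ≤ q) (F : SimpleGraph V) (hclique : F.cliqueNum ≤ w)
    (A B : Set V) (hA : w ^ (t + 2) ≤ A.ncard) (hB : B ⊆ Aᶜ) :
    (∃ X Y : Set V, X ⊆ A ∧ Y ⊆ B ∧
        (F.induce X).cliqueNum + (F.induce Y).cliqueNum ≤ F.cliqueNum ∧
        (A \ X).ncard < w ^ (t + 2) ∧ chiSet F (B \ Y) < q) ∨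
      (∃ P Q : Set V, P ⊆ A ∧ Q ⊆ B ∧ (∀ u ∈ P, ∀ v ∈ P, ¬ F.Adj u v) ∧
        P.ncard = t ∧ Anticomplete F P Q ∧ q ≤ chiSet F Q * w ^ (t * (t + 2))) :=
  stmt_14_general t w q ht hw hq F hclique A B
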